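/- Let φ ∈ {f,g,h} and let u be an infinite word over Σ₃. If φ(u) is rich, then u is rich. -/

import Mathlib

/-- The morphism `f` with f(0)=0, f(1)=01, f(2)=011. -/
def fm : List (Fin 3) → List (Fin 2) :=
  fun w => w.flatMap (fun a => if a = 0 then [0] else if a = 1 then [0,1] else [0,1,1])

/-- The morphism `g` with g(0)=011, g(1)=0121, g(2)=012121. -/
def gm : List (Fin 3) → List (Fin 3) :=
  fun w => w.flatMap (fun a => if a = 0 then [0,1,1] else if a = 1 then [0,1,2,1] else [0,1,2,1,2,1])

/-- The morphism `h` with h(0)=01, h(1)=02, h(2)=022. -/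
def hm : List (Fin 3) → List (Fin 3) :=
  fun w => w.flatMap (fun a => if a = 0 then [0,1] else if a = 1 then [0,2] else [0,2,2])

/-- A finite word of length n is rich if it contains exactly n distinct
nonempty palindromic factors. -/
def Rich {α : Type*} (w : List α) : Prop :=
  {p : List α | p ≠ [] ∧ p.reverse = p ∧ p <:+: w}.ncard = w.length

/-- `l` is a (finite) factor of the infinite word `w`. -/
def FactorOf {α : Type*} (l : List α) (w : ℕ → α) : Prop :=
  ∃ i : ℕ, ∀ k : ℕ, (h : k < l.length) → l.get ⟨k, h⟩ = w (i + k)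

/-- An infinite word is rich if all of its finite factors are rich. -/
def RichInf {α : Type*} (w : ℕ → α) : Prop :=
  ∀ l : List α, FactorOf l w → Rich l

/-- `y` is the image of the infinite word `u` under the morphism `φ`
(given as a map on finite words): the image of every finite prefix of `u`
is a prefix of `y`. -/
def IsImage {α β : Type*} (φ : List α → List β) (u : ℕ → α) (y : ℕ → β) : Prop :=
  ∀ n : ℕ, ∀ k : ℕ, (h : k < (φ (List.ofFn (fun i : Fin n => u i))).length) →
    (φ (List.ofFn (fun i : Fin n => u i))).get ⟨k, h⟩ = y k

/-!
Each of `f`, `g`, `h` has the form `a ↦ 0 · s(a)` with `s` injective and every `s(a)` a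
palindrome avoiding `0`. A finite word is rich iff each of its letters creates a palindromic
factor that does not occur before it, because a letter creates at most one new palindrome,
namely a suffix. If the letter `a` of a prefix `p a` of a factor `l` of `u` creates none, then
neither does the final `0` of `φ(p a) 0`: a palindromic suffix of `φ(p a) 0` starts with `0`,
so it is `φ(t) 0` for a palindromic suffix `t` of `p a`; then `t` occurs in `p` and `φ(t) 0`
occurs in `φ(p) 0`, a prefix of `φ(p a)`. As `φ(l) 0` is a factor of `φ(u)`, it is rich, and so
is `l`.
-/

variable {α β : Type*}

def palFactors (w : List α) : Set (List α) := {p | p ≠ [] ∧ p.reverse = p ∧ p <:+: w}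

theorem rich_iff_ncard_palFactors (w : List α) : Rich w ↔ (palFactors w).ncard = w.length :=
  Iff.rfl

theorem palFactors_finite (w : List α) : (palFactors w).Finite :=
  w.sublists.finite_toSet.subset fun _ hp => List.mem_sublists.2 hp.2.2.sublist

theorem palFactors_mono {v w : List α} (h : v <:+: w) : palFactors v ⊆ palFactors w :=
  fun _ ⟨hne, hpal, hp⟩ => ⟨hne, hpal, hp.trans h⟩

@[simp]
theorem palFactors_nil : palFactors ([] : List α) = ∅ := by
  ext p
  simp +contextual [palFactors]

theorem infix_of_suffix_of_palindrome {p q w : List α} {a : α} (hp : p.reverse = p)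
    (hq : q.reverse = q) (hpq : p <:+ q) (hne : p ≠ q) (hqw : q <:+ w ++ [a]) : p <:+: w := by
  obtain ⟨r, rfl⟩ := hpq
  obtain ⟨x, hx⟩ := hqw
  obtain ⟨r', c, hrc⟩ := (List.eq_nil_or_concat r.reverse).resolve_left
    (by simpa using fun h : r = [] => hne (by simp [h]))
  -- the palindrome `r ++ p` also reads `p ++ r.reverse`
  rw [← hq, List.reverse_append, hp, hrc, List.concat_eq_append] at hx
  exact ⟨x, r', List.append_inj_left' (t₁ := [c]) (t₂ := [a]) (by simpa using hx) rfl⟩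

theorem palFactors_append_singleton_sdiff_subsingleton (w : List α) (a : α) :
    (palFactors (w ++ [a]) \ palFactors w).Subsingleton := by
  have new : ∀ p ∈ palFactors (w ++ [a]) \ palFactors w,
      p.reverse = p ∧ p <:+ w ++ [a] ∧ ¬ p <:+: w := by
    rintro p ⟨⟨hp0, hp, hpw⟩, hpn⟩
    have hpn' : ¬ p <:+: w := fun h => hpn ⟨hp0, hp, h⟩
    exact ⟨hp, (List.infix_concat_iff.1 hpw).resolve_right hpn', hpn'⟩
  intro p hp' q hq'
  obtain ⟨hp, hps, hpn⟩ := new p hp'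
  obtain ⟨hq, hqs, hqn⟩ := new q hq'
  by_contra hne
  rcases le_total p.length q.length with hle | hle
  · exact hpn (infix_of_suffix_of_palindrome hp hq
      (List.suffix_of_suffix_length_le hps hqs hle) hne hqs)
  · exact hqn (infix_of_suffix_of_palindrome hq hp
      (List.suffix_of_suffix_length_le hqs hps hle) (Ne.symm hne) hps)

theorem ncard_palFactors_append_singleton_le (w : List α) (a : α) :
    (palFactors (w ++ [a])).ncard ≤ (palFactors w).ncard + 1 := by
  have hsplit :=
    Set.ncard_le_ncard_sdiff_add_ncard (palFactors (w ++ [a])) _ (palFactors_finite w)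
  have hnew : (palFactors (w ++ [a]) \ palFactors w).ncard ≤ 1 := by
    rcases (palFactors_append_singleton_sdiff_subsingleton w a).eq_empty_or_singleton
      with h | ⟨p, h⟩ <;> simp [h]
  omega

theorem ncard_palFactors_append_le (w z : List α) :
    (palFactors (w ++ z)).ncard ≤ (palFactors w).ncard + z.length := by
  induction z using List.reverseRecOn with
  | nil => simp
  | append_singleton z a ih =>
    have := ncard_palFactors_append_singleton_le (w ++ z) a
    rw [← List.append_assoc, List.length_append, List.length_singleton]
    omega

theorem ncard_palFactors_le_length (w : List α) : (palFactors w).ncard ≤ w.length := by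
  simpa using ncard_palFactors_append_le [] w

theorem rich_iff_forall_prefix {w : List α} :
    Rich w ↔ ∀ v a, v ++ [a] <+: w → ¬ palFactors (v ++ [a]) ⊆ palFactors v := by
  rw [rich_iff_ncard_palFactors]
  constructor
  · rintro hw v a ⟨z, rfl⟩ hsub
    have htail := ncard_palFactors_append_le (v ++ [a]) z
    have hstall := Set.ncard_le_ncard hsub (palFactors_finite v)
    have hv := ncard_palFactors_le_length v
    simp only [List.length_append, List.length_singleton] at hw
    omega
  · induction w using List.reverseRecOn with
    | nil => simp
    | append_singleton w a ih =>
      intro h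
      have hw := ih fun v b hv => h v b (hv.trans (List.prefix_append w [a]))
      obtain ⟨p, hp, hpw⟩ := Set.not_subset.1 (h w a List.prefix_rfl)
      have hgrow := Set.ncard_le_ncard
        (Set.insert_subset hp (palFactors_mono (List.infix_append [] w [a])))
        (palFactors_finite _)
      rw [Set.ncard_insert_of_notMem hpw (palFactors_finite w)] at hgrow
      have hwa := ncard_palFactors_le_length (w ++ [a])
      simp only [List.length_append, List.length_singleton] at hwa ⊢
      omega

theorem List.IsSuffix.of_append_of_head?_notMem {T l R : List α} {b : α} (hT : T <:+ l ++ R)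
    (hhead : T.head? = some b) (hb : b ∉ l) : T <:+ R := by
  induction l with
  | nil => simpa using hT
  | cons c l ih =>
    rcases List.suffix_cons_iff.1 hT with rfl | hT
    · simp_all
    · exact ih hT (fun h => hb (List.mem_cons_of_mem _ h))

section Marked

variable (b0 : β) (s : α → List β)

def marked (w : List α) : List β := w.flatMap fun a => b0 :: s a

@[simp]
theorem marked_nil : marked b0 s [] = [] := rfl

@[simp]
theorem marked_cons (a : α) (w : List α) : marked b0 s (a :: w) = b0 :: (s a ++ marked b0 s w) :=
  rfl

@[simp]
theorem marked_append (x y : List α) : marked b0 s (x ++ y) = marked b0 s x ++ marked b0 s y := by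
  simp [marked]

theorem singleton_prefix_marked_append_singleton (w : List α) :
    [b0] <+: marked b0 s w ++ [b0] := by
  cases w <;> simp

variable {b0 s}

theorem marked_append_singleton_infix {t p : List α} (h : t <:+: p) :
    marked b0 s t ++ [b0] <:+: marked b0 s p ++ [b0] := by
  obtain ⟨x, z, rfl⟩ := h
  obtain ⟨R, hR⟩ := singleton_prefix_marked_append_singleton b0 s z
  exact ⟨marked b0 s x, R, by simp [← hR]⟩

theorem marked_injective (hb : ∀ a, b0 ∉ s a) (hs : Function.Injective s) :
    Function.Injective (marked b0 s) := by
  classical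
  have hfirst : ∀ a x, (s a ++ marked b0 s x).takeWhile (· ≠ b0) = s a := by
    intro a x
    rw [List.takeWhile_append_of_pos (by simpa using fun c hc => ne_of_mem_of_not_mem hc (hb a))]
    cases x <;> simp
  intro x
  induction x with
  | nil => rintro (_ | _) h <;> simp_all
  | cons a x ih =>
    rintro (_ | ⟨c, y⟩) h
    · simp at h
    simp only [marked_cons, List.cons.injEq, true_and] at h
    have hac : s a = s c := by rw [← hfirst a x, h, hfirst]
    rw [hac] at h
    rw [hs hac, ih (List.append_cancel_left h)]

theorem reverse_marked_append_singleton (hs : ∀ a, (s a).reverse = s a) (w : List α) :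
    (marked b0 s w ++ [b0]).reverse = marked b0 s w.reverse ++ [b0] := by
  induction w with
  | nil => rfl
  | cons a w ih =>
    rw [show marked b0 s (a :: w) ++ [b0] = [b0] ++ s a ++ (marked b0 s w ++ [b0]) by simp,
      List.reverse_append, ih]
    simp [hs]

theorem exists_suffix_eq_marked_append_singleton (hb : ∀ a, b0 ∉ s a) {q : List α}
    {T : List β} (hT : T <:+ marked b0 s q ++ [b0]) (hhead : T.head? = some b0) :
    ∃ t, t <:+ q ∧ T = marked b0 s t ++ [b0] := by
  induction q with
  | nil =>
    rcases List.suffix_cons_iff.1 hT with rfl | hT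
    · exact ⟨[], List.nil_suffix, rfl⟩
    · simp_all
  | cons a q ih =>
    rw [marked_cons, List.cons_append, List.append_assoc] at hT
    rcases List.suffix_cons_iff.1 hT with rfl | hT
    · exact ⟨a :: q, List.suffix_refl _, by simp⟩
    · obtain ⟨t, ht, rfl⟩ := ih (hT.of_append_of_head?_notMem hhead (hb a))
      exact ⟨t, ht.trans (List.suffix_cons a q), rfl⟩

end Marked

section Transfer

variable {b0 : β} {s : α → List β} (hs : ∀ a, (s a).reverse = s a) (hb : ∀ a, b0 ∉ s a)
  (hinj : Function.Injective s)
include hs hb hinj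

theorem palFactors_marked_append_singleton_subset {p : List α} {a : α}
    (h : palFactors (p ++ [a]) ⊆ palFactors p) :
    palFactors (marked b0 s (p ++ [a]) ++ [b0]) ⊆ palFactors (marked b0 s (p ++ [a])) := by
  rintro T ⟨hT0, hT, hTw⟩
  refine ⟨hT0, hT, (List.infix_concat_iff.1 hTw).elim (fun hTs => ?_) id⟩
  have hhead : T.head? = some b0 := by
    obtain ⟨x, hx⟩ := hTs
    rw [← hT, List.head?_reverse, ← List.getLast?_append_of_ne_nil x hT0, hx,
      List.getLast?_concat]
  obtain ⟨t, ht, rfl⟩ := exists_suffix_eq_marked_append_singleton hb hTs hhead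
  have htpal : t.reverse = t := marked_injective hb hinj
    (List.append_cancel_right ((reverse_marked_append_singleton hs t).symm.trans hT))
  rcases eq_or_ne t [] with rfl | ht0
  · exact ⟨marked b0 s p, s a, by simp⟩
  · have htp : t <:+: p := (h ⟨ht0, htpal, ht.isInfix⟩).2.2
    exact (marked_append_singleton_infix htp).trans ⟨[], s a, by simp⟩

theorem rich_of_rich_marked_append_singleton {l : List α} (h : Rich (marked b0 s l ++ [b0])) :
    Rich l := by
  rw [rich_iff_forall_prefix] at h ⊢
  rintro p a ⟨z, rfl⟩ hsub
  refine h (marked b0 s (p ++ [a])) b0 ?_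
    (palFactors_marked_append_singleton_subset hs hb hinj hsub)
  rw [marked_append b0 s (p ++ [a]) z, List.append_assoc]
  exact (List.prefix_append_right_inj _).2 (singleton_prefix_marked_append_singleton b0 s z)

end Transfer

theorem FactorOf.of_infix {y : ℕ → α} {M L : List α}
    (hM : ∀ k (h : k < M.length), M.get ⟨k, h⟩ = y k) (hL : L <:+: M) : FactorOf L y := by
  obtain ⟨x, z, rfl⟩ := hL
  refine ⟨x.length, fun k hk => ?_⟩
  rw [← hM (x.length + k) (by simp; omega)]
  simp [List.getElem_append_right, List.getElem_append_left hk]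

theorem FactorOf.append_singleton_infix_ofFn {u : ℕ → α} {l : List α} (hl : FactorOf l u) :
    ∃ n c, l ++ [c] <:+: List.ofFn fun i : Fin n => u i := by
  obtain ⟨i, hi⟩ := hl
  refine ⟨i + (l.length + 1), u (i + l.length), List.ofFn fun j : Fin i => u j, [], ?_⟩
  rw [List.append_nil, List.ofFn_add, List.ofFn_succ', List.concat_eq_append]
  congr 2
  exact List.ext_get (by simp) fun k hk _ => by simpa using hi k hk

theorem RichInf.of_isImage_marked {b0 : β} {s : α → List β} (hs : ∀ a, (s a).reverse = s a)
    (hb : ∀ a, b0 ∉ s a) (hinj : Function.Injective s) {u : ℕ → α} {y : ℕ → β}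
    (him : IsImage (marked b0 s) u y) (hy : RichInf y) : RichInf u := by
  intro l hl
  obtain ⟨n, c, hlc⟩ := hl.append_singleton_infix_ofFn
  have hl' : marked b0 s l ++ [b0] <:+: marked b0 s (l ++ [c]) := ⟨[], s c, by simp⟩
  exact rich_of_rich_marked_append_singleton hs hb hinj
    (hy _ (FactorOf.of_infix (him n) (hl'.trans (hlc.flatMap _))))

theorem fm_eq_marked : fm = marked 0 ![[], [1], [1, 1]] := by
  funext w
  refine congrArg w.flatMap (funext fun a => ?_)
  fin_cases a <;> rfl

theorem gm_eq_marked : gm = marked 0 ![[1, 1], [1, 2, 1], [1, 2, 1, 2, 1]] := by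
  funext w
  refine congrArg w.flatMap (funext fun a => ?_)
  fin_cases a <;> rfl

theorem hm_eq_marked : hm = marked 0 ![[1], [2], [2, 2]] := by
  funext w
  refine congrArg w.flatMap (funext fun a => ?_)
  fin_cases a <;> rfl

/-- For φ ∈ {f,g,h} and an infinite word u over Σ₃: if φ(u) is rich then u is rich. -/
theorem rich_preimage_infinite (u : ℕ → Fin 3) :
    (∀ y : ℕ → Fin 2, IsImage fm u y → RichInf y → RichInf u) ∧
    (∀ y : ℕ → Fin 3, IsImage gm u y → RichInf y → RichInf u) ∧
    (∀ y : ℕ → Fin 3, IsImage hm u y → RichInf y → RichInf u) := by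
  rw [fm_eq_marked, gm_eq_marked, hm_eq_marked]
  exact ⟨fun _ => RichInf.of_isImage_marked (by decide) (by decide) (by decide),
    fun _ => RichInf.of_isImage_marked (by decide) (by decide) (by decide),
    fun _ => RichInf.of_isImage_marked (by decide) (by decide) (by decide)⟩
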